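/- Let K be an isolated non-saddle compact invariant set and x ∈ M∖K. Then: (i) x ∈ A(K) if and only if J⁺(x) ≠ ∅ and J⁺(x) ⊆ K; (ii) x ∈ R(K) if and only if J⁻(x) ≠ ∅ and J⁻(x) ⊆ K. -/

import Mathlib

open Set Filter Topology

variable {M : Type*}

/-- The positive semi-trajectory `γ⁺(x)`. -/
def posOrbit [TopologicalSpace M] (φ : Flow ℝ M) (x : M) : Set M :=
  {y | ∃ t : ℝ, 0 ≤ t ∧ φ t x = y}

/-- The negative semi-trajectory `γ⁻(x)`. -/
def negOrbit [TopologicalSpace M] (φ : Flow ℝ M) (x : M) : Set M :=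
  {y | ∃ t : ℝ, t ≤ 0 ∧ φ t x = y}

/-- The omega-limit set `ω(x) = ⋂_{t>0} closure (x·[t,∞))`. -/
def omegaLim [TopologicalSpace M] (φ : Flow ℝ M) (x : M) : Set M :=
  ⋂ t ∈ Set.Ioi (0:ℝ), closure {y | ∃ s : ℝ, t ≤ s ∧ φ s x = y}

/-- The negative omega-limit set `ω*(x) = ⋂_{t<0} closure (x·(-∞,t])`. -/
def alphaLim [TopologicalSpace M] (φ : Flow ℝ M) (x : M) : Set M :=
  ⋂ t ∈ Set.Iio (0:ℝ), closure {y | ∃ s : ℝ, s ≤ t ∧ φ s x = y}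

/-- `K` is invariant under the flow. -/
def FlowInvariant [TopologicalSpace M] (φ : Flow ℝ M) (K : Set M) : Prop :=
  ∀ x ∈ K, ∀ t : ℝ, φ t x ∈ K

/-- `K` is a compact invariant set which is the maximal invariant subset of some
compact neighborhood (an isolated invariant compactum). -/
def IsIsolatedInv [TopologicalSpace M] (φ : Flow ℝ M) (K : Set M) : Prop :=
  IsCompact K ∧ FlowInvariant φ K ∧
    ∃ N : Set M, IsCompact N ∧ K ⊆ interior N ∧
      ∀ x ∈ N, (∀ t : ℝ, φ t x ∈ N) → x ∈ K

/-- `K` is saddle: it admits a neighborhood `U` such that every neighborhood `V` of `K`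
contains a point whose positive and negative semi-trajectories both leave `U`. -/
def Saddle [TopologicalSpace M] (φ : Flow ℝ M) (K : Set M) : Prop :=
  ∃ U : Set M, K ⊆ interior U ∧ ∀ V : Set M, K ⊆ interior V →
    ∃ x ∈ V, ¬ posOrbit φ x ⊆ U ∧ ¬ negOrbit φ x ⊆ U

/-- `K` is non-saddle: every neighborhood `U` of `K` contains a neighborhood `V` of `K`
such that every point of `V` has `γ⁺(x) ⊆ U` or `γ⁻(x) ⊆ U`. -/
def NonSaddle [TopologicalSpace M] (φ : Flow ℝ M) (K : Set M) : Prop :=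
  ∀ U : Set M, K ⊆ interior U → ∃ V : Set M, K ⊆ interior V ∧ V ⊆ U ∧
    ∀ x ∈ V, posOrbit φ x ⊆ U ∨ negOrbit φ x ⊆ U

/-- The stable manifold (region of attraction) `A(K)`. -/
def Aset [TopologicalSpace M] (φ : Flow ℝ M) (K : Set M) : Set M :=
  {x | (omegaLim φ x).Nonempty ∧ omegaLim φ x ⊆ K}

/-- The unstable manifold (region of repulsion) `R(K)`. -/
def Rset [TopologicalSpace M] (φ : Flow ℝ M) (K : Set M) : Set M :=
  {x | (alphaLim φ x).Nonempty ∧ alphaLim φ x ⊆ K}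

/-- The region of influence `I(K) = A(K) ∪ R(K)`. -/
def Iset [TopologicalSpace M] (φ : Flow ℝ M) (K : Set M) : Set M :=
  Aset φ K ∪ Rset φ K

/-- `H(K) = A(K) ∩ R(K)`. -/
def Hset [TopologicalSpace M] (φ : Flow ℝ M) (K : Set M) : Set M :=
  Aset φ K ∩ Rset φ K

/-- The positive prolongational limit set `J⁺(x)`. -/
def Jplus [TopologicalSpace M] (φ : Flow ℝ M) (x : M) : Set M :=
  {y | ∃ (xs : ℕ → M) (ts : ℕ → ℝ), Tendsto xs atTop (𝓝 x) ∧
    Tendsto ts atTop atTop ∧ Tendsto (fun n => φ (ts n) (xs n)) atTop (𝓝 y)}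

/-- The negative prolongational limit set `J⁻(x)`. -/
def Jminus [TopologicalSpace M] (φ : Flow ℝ M) (x : M) : Set M :=
  {y | ∃ (xs : ℕ → M) (ts : ℕ → ℝ), Tendsto xs atTop (𝓝 x) ∧
    Tendsto ts atTop atBot ∧ Tendsto (fun n => φ (ts n) (xs n)) atTop (𝓝 y)}

/-- The two-sided prolongational limit set `J*(x)`. -/
def Jstar [TopologicalSpace M] (φ : Flow ℝ M) (x : M) : Set (M × M) :=
  {p | ∃ (xs : ℕ → M) (ts ss : ℕ → ℝ), Tendsto xs atTop (𝓝 x) ∧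
    Tendsto ts atTop atTop ∧ Tendsto ss atTop atBot ∧
    Tendsto (fun n => φ (ts n) (xs n)) atTop (𝓝 p.1) ∧
    Tendsto (fun n => φ (ss n) (xs n)) atTop (𝓝 p.2)}

/-- `x ∈ I(K)` is positively dissonant. -/
def PosDissonant [TopologicalSpace M] (φ : Flow ℝ M) (K : Set M) (x : M) : Prop :=
  x ∈ Iset φ K ∧ x ∉ Aset φ K ∧ (Jplus φ x ∩ K).Nonempty

/-- `x ∈ I(K)` is negatively dissonant. -/
def NegDissonant [TopologicalSpace M] (φ : Flow ℝ M) (K : Set M) (x : M) : Prop :=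
  x ∈ Iset φ K ∧ x ∉ Rset φ K ∧ (Jminus φ x ∩ K).Nonempty

/-- `x ∉ I(K)` is externally dissonant. -/
def ExtDissonant [TopologicalSpace M] (φ : Flow ℝ M) (K : Set M) (x : M) : Prop :=
  x ∉ Iset φ K ∧ (Jstar φ x ∩ K ×ˢ K).Nonempty

/-- `x` is a dissonant point of `K`. -/
def Dissonant [TopologicalSpace M] (φ : Flow ℝ M) (K : Set M) (x : M) : Prop :=
  PosDissonant φ K x ∨ NegDissonant φ K x ∨ ExtDissonant φ K x

/-- `N` is an isolating block for `K` with entrance set `Ni` and exit set `No`. -/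
structure IsolatingBlock [TopologicalSpace M] (φ : Flow ℝ M) (K N Ni No : Set M) : Prop where
  compact_N : IsCompact N
  nbhd : K ⊆ interior N
  maximal : ∀ x ∈ N, (∀ t : ℝ, φ t x ∈ N) → x ∈ K
  compact_Ni : IsCompact Ni
  compact_No : IsCompact No
  Ni_sub : Ni ⊆ frontier N
  No_sub : No ⊆ frontier N
  cover : frontier N = Ni ∪ No
  entrance : ∀ x ∈ Ni, ∃ ε > (0:ℝ), ∀ t ∈ Set.Ico (-ε) (0:ℝ), φ t x ∉ N
  exitSet : ∀ x ∈ No, ∃ δ > (0:ℝ), ∀ t ∈ Set.Ioc (0:ℝ) δ, φ t x ∉ N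
  tang_neg : ∀ x ∈ frontier N \ Ni, ∃ ε > (0:ℝ), ∀ t ∈ Set.Ico (-ε) (0:ℝ), φ t x ∈ interior N
  tang_pos : ∀ x ∈ frontier N \ No, ∃ δ > (0:ℝ), ∀ t ∈ Set.Ioc (0:ℝ) δ, φ t x ∈ interior N

/-- `p` is strongly influenced by `K`. -/
def StronglyInfluenced [TopologicalSpace M] (φ : Flow ℝ M) (K : Set M) (p : M) : Prop :=
  ∃ U ∈ 𝓝 p, ∀ V : Set M, K ⊆ interior V → ∃ T : ℝ, 0 ≤ T ∧ ∀ x ∈ U,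
    (∀ t : ℝ, T ≤ t → φ t x ∈ V) ∨ (∀ t : ℝ, t ≤ -T → φ t x ∈ V)

/-- `p` is strongly attracted by `K`. -/
def StronglyAttracted [TopologicalSpace M] (φ : Flow ℝ M) (K : Set M) (p : M) : Prop :=
  ∃ U ∈ 𝓝 p, ∀ V : Set M, K ⊆ interior V → ∃ T : ℝ, 0 ≤ T ∧ ∀ x ∈ U,
    ∀ t : ℝ, T ≤ t → φ t x ∈ V

/-- `p` is strongly repelled by `K`. -/
def StronglyRepelled [TopologicalSpace M] (φ : Flow ℝ M) (K : Set M) (p : M) : Prop :=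
  ∃ U ∈ 𝓝 p, ∀ V : Set M, K ⊆ interior V → ∃ T : ℝ, 0 ≤ T ∧ ∀ x ∈ U,
    ∀ t : ℝ, t ≤ -T → φ t x ∈ V

/-- `K` is (positively) stable. -/
def IsStable [TopologicalSpace M] (φ : Flow ℝ M) (K : Set M) : Prop :=
  ∀ U : Set M, K ⊆ interior U → ∃ V : Set M, K ⊆ interior V ∧ V ⊆ U ∧
    ∀ x ∈ V, ∀ t : ℝ, 0 ≤ t → φ t x ∈ V

/-- `K` is negatively stable. -/
def IsNegStable [TopologicalSpace M] (φ : Flow ℝ M) (K : Set M) : Prop :=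
  ∀ U : Set M, K ⊆ interior U → ∃ V : Set M, K ⊆ interior V ∧ V ⊆ U ∧
    ∀ x ∈ V, ∀ t : ℝ, t ≤ 0 → φ t x ∈ V

/-- `K` is an attractor: stable and attracting some neighborhood. -/
def IsAttractor [TopologicalSpace M] (φ : Flow ℝ M) (K : Set M) : Prop :=
  IsStable φ K ∧ ∃ W : Set M, K ⊆ interior W ∧ W ⊆ Aset φ K

/-- `K` is a repeller: negatively stable and repelling some neighborhood. -/
def IsRepeller [TopologicalSpace M] (φ : Flow ℝ M) (K : Set M) : Prop :=
  IsNegStable φ K ∧ ∃ W : Set M, K ⊆ interior W ∧ W ⊆ Rset φ K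

/-!
For `x ∈ A(K)`, a point `y ∈ J⁺(x) \ K` is excluded by non-saddleness: choose a compact
neighbourhood `N'` of `K` inside the isolating neighbourhood with `y ∉ N'`, and let `V` be the
neighbourhood of `K` given by non-saddleness. Far enough along its orbit, `x` lies in `V` and
stays there. The points `xₙ → x` with `xₙ·tₙ → y` eventually lie in `V` too, and since their
forward orbits must leave `N'`, their backward orbits stay in `N'`. In the limit the whole orbit
of `x` lies in `N'`, so `x ∈ K` by isolation.

Conversely, if `J⁺(x)` is nonempty and contained in `K` but `ω(x) = ∅`, the orbit of `x`
eventually leaves a compact neighbourhood `W` of `K` for good, while orbits of nearby points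
reach `W` near `K`. They cross `∂W` at times which, after passing to a subsequence, either tend
to `∞`, giving a point of `J⁺(x) ∩ ∂W`, or converge, giving a point of `∂W` on the late orbit
of `x`. Both are impossible.

Part (ii) is part (i) for the reversed flow.
-/
section

variable {X : Type*} [TopologicalSpace X]

theorem exists_mem_Icc_mem_frontier {γ : ℝ → X} (hγ : Continuous γ) {s : Set X} {a b : ℝ}
    (hab : a ≤ b) (ha : γ a ∈ s) (hb : γ b ∉ s) : ∃ c ∈ Icc a b, γ c ∈ frontier s := by
  by_contra! h
  have hsplit : Icc a b ⊆ γ ⁻¹' interior s ∪ γ ⁻¹' (closure s)ᶜ := fun c hc => by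
    by_cases hcl : γ c ∈ closure s
    · exact Or.inl (by_contra fun hint => h c hc ⟨hcl, hint⟩)
    · exact Or.inr hcl
  have hIcc := isPreconnected_Icc.subset_left_of_subset_union
    (isOpen_interior.preimage hγ) (isClosed_closure.isOpen_compl.preimage hγ)
    (disjoint_compl_right.mono_left interior_subset_closure |>.preimage γ) hsplit
    ⟨a, left_mem_Icc.2 hab, ?_⟩
  · exact hb (interior_subset (hIcc (right_mem_Icc.2 hab)))
  · by_contra hint
    exact h a (left_mem_Icc.2 hab) ⟨subset_closure ha, hint⟩

theorem IsCompact.frontier [T2Space X] {s : Set X} (hs : IsCompact s) : IsCompact (frontier s) :=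
  hs.of_isClosed_subset isClosed_frontier hs.isClosed.frontier_subset

theorem frequently_mem_frontier {γ : ℝ → X} (hγ : Continuous γ) {s : Set X}
    (hin : ∃ᶠ t in atTop, γ t ∈ s) (hout : ∃ᶠ t in atTop, γ t ∉ s) :
    ∃ᶠ t in atTop, γ t ∈ frontier s := by
  rw [frequently_atTop] at hin hout ⊢
  intro T
  obtain ⟨a, hTa, ha⟩ := hin T
  obtain ⟨b, hab, hb⟩ := hout a
  obtain ⟨c, hc, hcs⟩ := exists_mem_Icc_mem_frontier hγ hab ha hb
  exact ⟨c, hTa.trans hc.1, hcs⟩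

end

theorem exists_subseq_tendsto_atTop_or_tendsto_nhds {u : ℕ → ℝ} {S : ℝ} (hu : ∀ n, S ≤ u n) :
    ∃ ψ : ℕ → ℕ, StrictMono ψ ∧
      (Tendsto (u ∘ ψ) atTop atTop ∨ ∃ c, S ≤ c ∧ Tendsto (u ∘ ψ) atTop (𝓝 c)) := by
  obtain ⟨a, ψ, hψ, hlim⟩ := CompactSpace.tendsto_subseq (fun n => (u n : EReal))
  have hSa : (S : EReal) ≤ a := ge_of_tendsto' hlim fun n => EReal.coe_le_coe_iff.2 (hu (ψ n))
  refine ⟨ψ, hψ, ?_⟩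
  induction a using EReal.rec with
  | bot => exact absurd hSa (by simp)
  | coe c => exact Or.inr ⟨c, EReal.coe_le_coe_iff.1 hSa, EReal.tendsto_coe.1 hlim⟩
  | top => exact Or.inl (EReal.tendsto_coe_nhds_top_iff.1 hlim)

section

variable [TopologicalSpace M] {φ : Flow ℝ M} {K : Set M} {x : M}

theorem mem_omegaLim_iff_mapClusterPt {z : M} :
    z ∈ omegaLim φ x ↔ MapClusterPt z atTop (fun t => φ t x) := by
  rw [mapClusterPt_atTop_iff_forall_mem_closure]
  simp only [omegaLim, mem_iInter₂, mem_Ioi]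
  refine ⟨fun h T => ?_, fun h T _ => h T⟩
  refine closure_mono ?_ (h (max T 1) (lt_of_lt_of_le one_pos (le_max_right T 1)))
  exact image_mono (Ici_subset_Ici.2 (le_max_left T 1))

theorem omegaLim_inter_nonempty_of_frequently {C : Set M} (hC : IsCompact C)
    (h : ∃ᶠ t in atTop, φ t x ∈ C) : (omegaLim φ x ∩ C).Nonempty := by
  obtain ⟨z, hzC, hz⟩ := hC.exists_mapClusterPt_of_frequently h
  exact ⟨z, mem_omegaLim_iff_mapClusterPt.2 hz, hzC⟩

theorem omegaLim_subset_Jplus [FirstCountableTopology M] : omegaLim φ x ⊆ Jplus φ x := by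
  intro z hz
  obtain ⟨ts, hz, hts⟩ := (mem_omegaLim_iff_mapClusterPt.1 hz).exists_seq_tendsto
  exact ⟨fun _ => x, ts, tendsto_const_nhds, hts, hz⟩

theorem eventually_mem_of_omegaLim_subset [LocallyCompactSpace M] [T2Space M]
    (hK : IsCompact K) (hne : (omegaLim φ x).Nonempty) (hsub : omegaLim φ x ⊆ K)
    {O : Set M} (hO : IsOpen O) (hKO : K ⊆ O) : ∀ᶠ t in atTop, φ t x ∈ O := by
  obtain ⟨W, hWc, hKW, hWO⟩ := exists_compact_between hK hO hKO
  refine Eventually.mono ?_ fun t ht => hWO (interior_subset ht)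
  by_contra hout
  rw [not_eventually] at hout
  obtain ⟨z, hz⟩ := hne
  have hin : ∃ᶠ t in atTop, φ t x ∈ interior W :=
    (mem_omegaLim_iff_mapClusterPt.1 hz).frequently
      (isOpen_interior.mem_nhds (hKW (hsub hz)))
  have hcross : ∃ᶠ t in atTop, φ t x ∈ frontier W :=
    (frequently_mem_frontier (by fun_prop) hin hout).mono
      fun t ht => frontier_interior_subset ht
  obtain ⟨w, hwω, hwW⟩ := omegaLim_inter_nonempty_of_frequently hWc.frontier hcross
  exact hwW.2 (hKW (hsub hwω))

theorem Jplus_subset_Jplus_flow (T : ℝ) : Jplus φ x ⊆ Jplus φ (φ T x) := by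
  rintro y ⟨xs, ts, hxs, hts, hy⟩
  refine ⟨fun n => φ T (xs n), fun n => ts n - T, ((φ.continuous_toFun T).tendsto x).comp hxs,
    tendsto_atTop_add_const_right _ _ hts, ?_⟩
  simpa only [← Flow.map_add, sub_add_cancel] using hy

theorem exists_mem_Jplus_or_flow_of_frequently [FirstCountableTopology M] [T2Space M]
    {C : Set M} (hC : IsCompact C) {xs : ℕ → M} (hxs : Tendsto xs atTop (𝓝 x)) {S : ℝ}
    (h : ∃ᶠ n in atTop, ∃ c, S ≤ c ∧ φ c (xs n) ∈ C) :
    ∃ z ∈ C, z ∈ Jplus φ x ∨ ∃ c, S ≤ c ∧ φ c x = z := by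
  obtain ⟨ψ, hψ, hψC⟩ := extraction_of_frequently_atTop h
  choose cs hcS hcC using hψC
  obtain ⟨z, hzC, ρ, hρ, hz⟩ := hC.tendsto_subseq hcC
  obtain ⟨σ, hσ, hcs⟩ := exists_subseq_tendsto_atTop_or_tendsto_nhds fun k => hcS (ρ k)
  have hxs' : Tendsto (xs ∘ ψ ∘ ρ ∘ σ) atTop (𝓝 x) :=
    hxs.comp ((hψ.comp hρ).comp hσ).tendsto_atTop
  have hz' := hz.comp hσ.tendsto_atTop
  refine ⟨z, hzC, ?_⟩
  rcases hcs with hcs | ⟨c, hc, hcs⟩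
  · exact Or.inl ⟨_, _, hxs', hcs, hz'⟩
  · exact Or.inr ⟨c, hc,
      tendsto_nhds_unique ((φ.cont'.tendsto (c, x)).comp (hcs.prodMk_nhds hxs')) hz'⟩

theorem negOrbit_subset_of_mem_Jplus_of_notMem {F V : Set M} (hF : IsClosed F)
    (hV : ∀ z ∈ V, posOrbit φ z ⊆ F ∨ negOrbit φ z ⊆ F) (hxV : x ∈ interior V) {y : M}
    (hy : y ∈ Jplus φ x) (hyF : y ∉ F) : negOrbit φ x ⊆ F := by
  obtain ⟨xs, ts, hxs, hts, hlim⟩ := hy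
  have hpos : ∀ᶠ n in atTop, ¬ posOrbit φ (xs n) ⊆ F := by
    rw [← not_frequently]
    intro hfr
    refine hyF (hF.mem_of_frequently_of_tendsto ?_ hlim)
    exact (hfr.and_eventually (hts.eventually_ge_atTop 0)).mono fun n hn =>
      hn.1 ⟨ts n, hn.2, rfl⟩
  have hneg : ∀ᶠ n in atTop, negOrbit φ (xs n) ⊆ F := by
    filter_upwards [hxs (mem_interior_iff_mem_nhds.1 hxV), hpos] with n hnV hnpos
    exact (hV _ hnV).resolve_left hnpos
  rintro _ ⟨t, ht, rfl⟩
  exact hF.mem_of_tendsto (((φ.continuous_toFun t).tendsto x).comp hxs)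
    (hneg.mono fun n hn => hn ⟨t, ht, rfl⟩)

theorem Jplus_subset_of_mem_Aset [LocallyCompactSpace M] [T2Space M]
    (hIso : IsIsolatedInv φ K) (hNS : NonSaddle φ K) (hx : x ∉ K) (hA : x ∈ Aset φ K) :
    Jplus φ x ⊆ K := by
  obtain ⟨hKc, hKinv, N, -, hKN, hNmax⟩ := hIso
  intro y hy
  by_contra hyK
  obtain ⟨N', hN'c, hKN', hN'N⟩ := exists_compact_between (U := interior N \ {y}) hKc
    (isOpen_interior.sdiff isClosed_singleton) fun z hz =>
      ⟨hKN hz, fun h => hyK (by rwa [← eq_of_mem_singleton h])⟩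
  obtain ⟨V, hKV, hVN', hdich⟩ := hNS N' hKN'
  obtain ⟨T, hT⟩ :=
    (eventually_mem_of_omegaLim_subset hKc hA.1 hA.2 isOpen_interior hKV).exists_forall_of_atTop
  have hpos : posOrbit φ (φ T x) ⊆ N' := by
    rintro _ ⟨t, ht, rfl⟩
    rw [← Flow.map_add]
    exact hVN' (interior_subset (hT _ (le_add_of_nonneg_left ht)))
  have hneg : negOrbit φ (φ T x) ⊆ N' :=
    negOrbit_subset_of_mem_Jplus_of_notMem hN'c.isClosed hdich (hT T le_rfl)
      (Jplus_subset_Jplus_flow T hy) fun h => (hN'N h).2 rfl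
  have horbit : ∀ t, φ t (φ T x) ∈ N := fun t => interior_subset (hN'N
    ((le_total 0 t).elim (fun h => hpos ⟨t, h, rfl⟩) fun h => hneg ⟨t, h, rfl⟩)).1
  have hxK := hKinv _ (hNmax _ (by simpa only [Flow.map_zero_apply] using horbit 0) horbit) (-T)
  rw [← Flow.map_add, neg_add_cancel, Flow.map_zero_apply] at hxK
  exact hx hxK

theorem mem_Aset_of_Jplus_subset [FirstCountableTopology M] [T2Space M]
    [WeaklyLocallyCompactSpace M] (hK : IsCompact K) (hne : (Jplus φ x).Nonempty)
    (hJK : Jplus φ x ⊆ K) : x ∈ Aset φ K := by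
  refine ⟨?_, omegaLim_subset_Jplus.trans hJK⟩
  obtain ⟨W, hWc, hKW⟩ := exists_compact_superset hK
  by_contra hω
  have hleave : ∀ᶠ t in atTop, φ t x ∉ W := by
    rw [← not_frequently]
    exact fun hfr => hω ((omegaLim_inter_nonempty_of_frequently hWc hfr).mono inter_subset_left)
  obtain ⟨S, hS⟩ := hleave.exists_forall_of_atTop
  obtain ⟨y, xs, ts, hxs, hts, hy⟩ := hne
  have hcross : ∃ᶠ n in atTop, ∃ c, S ≤ c ∧ φ c (xs n) ∈ frontier W := by
    have hSout : ∀ᶠ n in atTop, φ S (xs n) ∉ W :=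
      ((φ.continuous_toFun S).tendsto x).comp hxs
        (hWc.isClosed.isOpen_compl.mem_nhds (hS S le_rfl))
    have hin : ∀ᶠ n in atTop, φ (ts n) (xs n) ∈ W :=
      hy (mem_of_superset (isOpen_interior.mem_nhds (hKW (hJK ⟨xs, ts, hxs, hts, hy⟩)))
        interior_subset)
    refine (hSout.and (hin.and (hts.eventually_ge_atTop S))).frequently.mono ?_
    rintro n ⟨hSn, hn, hSt⟩
    obtain ⟨c, hc, hcW⟩ := exists_mem_Icc_mem_frontier (γ := fun t => φ t (xs n)) (s := Wᶜ)
      (by fun_prop) hSt hSn (not_not.2 hn)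
    exact ⟨c, hc.1, frontier_compl W ▸ hcW⟩
  obtain ⟨z, hzW, hz⟩ := exists_mem_Jplus_or_flow_of_frequently hWc.frontier hxs hcross
  rcases hz with hzJ | ⟨c, hc, rfl⟩
  · exact hzW.2 (hKW (hJK hzJ))
  · exact hS c hc (hWc.isClosed.frontier_subset hzW)

theorem mem_Aset_iff_Jplus [FirstCountableTopology M] [T2Space M] [LocallyCompactSpace M]
    (hIso : IsIsolatedInv φ K) (hNS : NonSaddle φ K) (hx : x ∉ K) :
    x ∈ Aset φ K ↔ (Jplus φ x).Nonempty ∧ Jplus φ x ⊆ K :=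
  ⟨fun hA => ⟨hA.1.mono omegaLim_subset_Jplus, Jplus_subset_of_mem_Aset hIso hNS hx hA⟩,
    fun h => mem_Aset_of_Jplus_subset hIso.1 h.1 h.2⟩

theorem posOrbit_reverse : posOrbit φ.reverse x = negOrbit φ x := by
  ext y
  refine ⟨fun ⟨t, ht, h⟩ => ⟨-t, neg_nonpos.2 ht, h⟩,
    fun ⟨t, ht, h⟩ => ⟨-t, neg_nonneg.2 ht, ?_⟩⟩
  rwa [Flow.reverse_apply, neg_neg]

theorem negOrbit_reverse : negOrbit φ.reverse x = posOrbit φ x := by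
  ext y
  refine ⟨fun ⟨t, ht, h⟩ => ⟨-t, neg_nonneg.2 ht, h⟩,
    fun ⟨t, ht, h⟩ => ⟨-t, neg_nonpos.2 ht, ?_⟩⟩
  rwa [Flow.reverse_apply, neg_neg]

theorem omegaLim_reverse : omegaLim φ.reverse x = alphaLim φ x := by
  have htail (t : ℝ) :
      {y | ∃ s, t ≤ s ∧ φ.reverse s x = y} = {y | ∃ s, s ≤ -t ∧ φ s x = y} := by
    ext y
    refine ⟨fun ⟨s, hs, h⟩ => ⟨-s, neg_le_neg hs, h⟩,
      fun ⟨s, hs, h⟩ => ⟨-s, le_neg.2 hs, ?_⟩⟩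
    rwa [Flow.reverse_apply, neg_neg]
  ext z
  simp only [omegaLim, alphaLim, htail, mem_iInter₂, mem_Ioi, mem_Iio]
  exact ⟨fun h t ht => neg_neg t ▸ h (-t) (neg_pos.2 ht),
    fun h t ht => h (-t) (neg_neg_iff_pos.2 ht)⟩

theorem Aset_reverse : Aset φ.reverse K = Rset φ K := by
  simp only [Aset, Rset, omegaLim_reverse]

theorem Jplus_reverse : Jplus φ.reverse x = Jminus φ x := by
  ext z
  refine ⟨fun ⟨xs, ts, hxs, hts, hz⟩ =>
      ⟨xs, -ts, hxs, tendsto_neg_atTop_atBot.comp hts, hz⟩,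
    fun ⟨xs, ts, hxs, hts, hz⟩ => ⟨xs, -ts, hxs, tendsto_neg_atBot_atTop.comp hts, ?_⟩⟩
  simpa only [Flow.reverse_apply, Pi.neg_apply, neg_neg] using hz

theorem IsIsolatedInv.reverse (h : IsIsolatedInv φ K) : IsIsolatedInv φ.reverse K := by
  obtain ⟨hK, hinv, N, hN, hKN, hmax⟩ := h
  exact ⟨hK, fun z hz t => hinv z hz (-t), N, hN, hKN,
    fun z hz horbit => hmax z hz fun t => neg_neg t ▸ horbit (-t)⟩

theorem NonSaddle.reverse (h : NonSaddle φ K) : NonSaddle φ.reverse K := by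
  intro U hU
  obtain ⟨V, hKV, hVU, hV⟩ := h U hU
  refine ⟨V, hKV, hVU, fun z hz => ?_⟩
  rw [posOrbit_reverse, negOrbit_reverse]
  exact (hV z hz).symm

end

/-- for `x ∉ K`: `x ∈ A(K)` iff `J⁺(x)` is nonempty and contained in `K`,
and `x ∈ R(K)` iff `J⁻(x)` is nonempty and contained in `K`. -/
theorem stmt10 {M : Type*} [MetricSpace M] [LocallyCompactSpace M]
    (φ : Flow ℝ M) (K : Set M)
    (hIso : IsIsolatedInv φ K) (hNS : NonSaddle φ K) (x : M) (hx : x ∉ K) :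
    (x ∈ Aset φ K ↔ (Jplus φ x).Nonempty ∧ Jplus φ x ⊆ K) ∧
    (x ∈ Rset φ K ↔ (Jminus φ x).Nonempty ∧ Jminus φ x ⊆ K) := by
  refine ⟨mem_Aset_iff_Jplus hIso hNS hx, ?_⟩
  rw [← Aset_reverse, ← Jplus_reverse]
  exact mem_Aset_iff_Jplus hIso.reverse hNS.reverse hx
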